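/- arXiv:2509.21508 — 5 statements merged into one kernel-verified Lean document; each statement's English description precedes it below -/
import Mathlib

section
/- Define g(y) = ln(2y) + ln(ln(2y)) and h(y) = ln(2y) + ln(2·ln(2y)). Then for all sufficiently large y > 0 one has cosh(g(y))/g(y) ≤ y ≤ cosh(h(y))/h(y). -/
/-!
With `L = ln(2y)` one has `g(y) = ln(2yL)` and `h(y) = ln(4yL)`, so `cosh (ln z) = (z + z⁻¹)/2`
gives `cosh (g y) = yL + (4yL)⁻¹` and `cosh (h y) ≥ 2yL`. The lower bound thus reduces to
`(4yL)⁻¹ ≤ y ln L`, which holds once `L ≥ e`, and the upper bound to `ln(2L) ≤ L`.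
-/

open Real

lemma log_two_mul_le_self {x : ℝ} (hx : 0 < x) : log (2 * x) ≤ x := by
  rw [log_mul two_ne_zero hx.ne']
  linarith [log_le_sub_one_of_pos hx, log_two_lt_d9]

lemma cosh_log_add_log {a b : ℝ} (ha : 0 < a) (hb : 0 < b) :
    cosh (log a + log b) = (a * b + (a * b)⁻¹) / 2 := by
  rw [← log_mul ha.ne' hb.ne', cosh_log (mul_pos ha hb)]

lemma cosh_div_le_of_exp_exp_one_le {y : ℝ} (hy : exp (exp 1) ≤ 2 * y) :
    cosh (log (2 * y) + log (log (2 * y))) / (log (2 * y) + log (log (2 * y))) ≤ y := by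
  have h2y : 1 ≤ 2 * y := le_trans (one_le_exp (exp_pos 1).le) hy
  set L := log (2 * y)
  have hL : exp 1 ≤ L := (le_log_iff_exp_le (by linarith)).2 hy
  have hL1 : 1 ≤ L := by linarith [add_one_le_exp (1 : ℝ)]
  have hlogL : 1 ≤ log L := (le_log_iff_exp_le (by linarith)).2 hL
  have hinv : (2 * y * L)⁻¹ ≤ 1 := inv_le_one_of_one_le₀ (one_le_mul_of_one_le_of_one_le h2y hL1)
  rw [div_le_iff₀ (by linarith), cosh_log_add_log (by linarith) (by linarith)]
  linarith [le_mul_of_one_le_right (by linarith : 0 ≤ y) hlogL]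

lemma le_cosh_div_of_exp_one_le {y : ℝ} (hy : exp 1 ≤ 2 * y) :
    y ≤ cosh (log (2 * y) + log (2 * log (2 * y))) / (log (2 * y) + log (2 * log (2 * y))) := by
  have hy0 : 0 < 2 * y := (exp_pos 1).trans_le hy
  set L := log (2 * y)
  have hL : 1 ≤ L := (le_log_iff_exp_le hy0).2 hy
  have hinv : 0 ≤ (2 * y * (2 * L))⁻¹ := by positivity
  have hpos : 0 < L + log (2 * L) := by linarith [log_nonneg (by linarith : (1 : ℝ) ≤ 2 * L)]
  rw [le_div_iff₀ hpos, cosh_log_add_log hy0 (by linarith : (0 : ℝ) < 2 * L)]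
  linarith [mul_le_mul_of_nonneg_left (log_two_mul_le_self (by linarith : 0 < L)) hy0.le]

/-- With `g(y) = ln(2y) + ln(ln(2y))` and `h(y) = ln(2y) + ln(2 ln(2y))`, for all
sufficiently large `y` one has `cosh(g y)/g y ≤ y ≤ cosh(h y)/h y`. -/
theorem stmt2 :
    ∃ y₀ : ℝ, ∀ y : ℝ, y₀ ≤ y →
      Real.cosh (Real.log (2 * y) + Real.log (Real.log (2 * y))) /
          (Real.log (2 * y) + Real.log (Real.log (2 * y))) ≤ y ∧
      y ≤ Real.cosh (Real.log (2 * y) + Real.log (2 * Real.log (2 * y))) /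
          (Real.log (2 * y) + Real.log (2 * Real.log (2 * y))) := by
  refine ⟨exp (exp 1) / 2, fun y hy => ?_⟩
  have h2y : exp (exp 1) ≤ 2 * y := by linarith
  have hexp : exp 1 ≤ exp (exp 1) := exp_le_exp.2 (by linarith [add_one_le_exp (1 : ℝ)])
  exact ⟨cosh_div_le_of_exp_exp_one_le h2y, le_cosh_div_of_exp_one_le (hexp.trans h2y)⟩
end

section
/- Let f(x) = cosh(x)/x with unique minimum at x_min, and let f⁻¹ denote the inverse of f restricted to (x_min, ∞). Then for all sufficiently large y, ln(2y) ≤ ln(2y) + ln(ln(2y)) ≤ f⁻¹(y) ≤ ln(2y) + ln(2·ln(2y)). -/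
/-!
Since `(cosh x / x)' = (x sinh x - cosh x) / x²` and `(x sinh x - cosh x)' = x cosh x > 0`, the
minimum point `x_min` is the only zero of `x sinh x - cosh x` on `(0, ∞)` and `cosh x / x` is
strictly increasing on `[x_min, ∞)`. Writing `L = ln(2y)`, so that `y = eᴸ / 2`, it therefore
suffices to compare `f` with `eᴸ / 2` at the two test points: at `g = L + ln L` we have
`e^g = L eᴸ`, and `cosh g ≤ (e^g + 1) / 2 ≤ g eᴸ / 2` once `ln L ≥ 1`; at `h = L + ln(2L)` we
have `cosh h ≥ e^h / 2 = L eᴸ ≥ h eᴸ / 2` because `ln(2L) ≤ L`.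
-/

open Real Set

theorem strictMonoOn_mul_sinh_sub_cosh :
    StrictMonoOn (fun x : ℝ => x * sinh x - cosh x) (Ici 0) := by
  refine strictMonoOn_of_deriv_pos (convex_Ici 0) (by fun_prop) fun t ht => ?_
  rw [interior_Ici] at ht
  have hd : HasDerivAt (fun x : ℝ => x * sinh x - cosh x)
      (1 * sinh t + t * cosh t - sinh t) t :=
    ((hasDerivAt_id' t).mul (hasDerivAt_sinh t)).sub (hasDerivAt_cosh t)
  rw [hd.deriv, one_mul, add_sub_cancel_left]
  exact mul_pos ht (cosh_pos t)

theorem cosh_lt_mul_sinh_of_lt {a t : ℝ} (ha : 0 ≤ a) (hchar : a * sinh a = cosh a)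
    (hat : a < t) : cosh t < t * sinh t := by
  have := strictMonoOn_mul_sinh_sub_cosh (mem_Ici.2 ha) (mem_Ici.2 (ha.trans hat.le)) hat
  simp only at this
  linarith

theorem strictMonoOn_cosh_div_self {a : ℝ} (ha : 0 < a) (hchar : a * sinh a = cosh a) :
    StrictMonoOn (fun x : ℝ => cosh x / x) (Ici a) := by
  refine strictMonoOn_of_deriv_pos (convex_Ici a)
    (continuous_cosh.continuousOn.div continuousOn_id fun t ht => (ha.trans_le ht).ne')
    fun t ht => ?_
  rw [interior_Ici] at ht
  have ht0 : 0 < t := ha.trans ht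
  have hd : HasDerivAt (fun x : ℝ => cosh x / x) ((sinh t * t - cosh t * 1) / t ^ 2) t :=
    (hasDerivAt_cosh t).div (hasDerivAt_id t) ht0.ne'
  rw [hd.deriv]
  have := cosh_lt_mul_sinh_of_lt ha.le hchar ht
  have : 0 < sinh t * t - cosh t * 1 := by linarith
  positivity

theorem cosh_le_exp_div_two_add_half {x : ℝ} (hx : 0 ≤ x) : cosh x ≤ exp x / 2 + 1 / 2 := by
  rw [cosh_eq]
  linarith [exp_le_one_iff.2 (neg_nonpos.2 hx)]

theorem exp_div_two_le_cosh (x : ℝ) : exp x / 2 ≤ cosh x := by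
  rw [cosh_eq]
  linarith [exp_pos (-x)]

theorem cosh_div_self_add_log_le {L : ℝ} (hL : exp 1 ≤ L) :
    cosh (L + log L) / (L + log L) ≤ exp L / 2 := by
  have hL0 : 0 < L := (exp_pos 1).trans_le hL
  have hlogL : 1 ≤ log L := (le_log_iff_exp_le hL0).2 hL
  have hexpL : 1 ≤ exp L := one_le_exp hL0.le
  have hg : 0 < L + log L := by linarith
  rw [div_le_iff₀ hg]
  calc cosh (L + log L) ≤ exp (L + log L) / 2 + 1 / 2 := cosh_le_exp_div_two_add_half hg.le
    _ = L * exp L / 2 + 1 / 2 := by rw [exp_add, exp_log hL0]; ring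
    _ ≤ exp L / 2 * (L + log L) := by nlinarith

theorem exp_div_two_le_cosh_div_self_add_log_two_mul {L : ℝ} (hL : 1 / 2 ≤ L) :
    exp L / 2 ≤ cosh (L + log (2 * L)) / (L + log (2 * L)) := by
  have hL0 : 0 < L := by linarith
  have hlog2L : 0 ≤ log (2 * L) := log_nonneg (by linarith)
  have hlog2L_le : log (2 * L) ≤ L := by
    rw [log_mul two_ne_zero hL0.ne']
    linarith [log_two_lt_d9, log_le_sub_one_of_pos hL0]
  have hh : 0 < L + log (2 * L) := by linarith
  rw [le_div_iff₀ hh]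
  calc exp L / 2 * (L + log (2 * L)) ≤ L * exp L := by nlinarith [exp_pos L]
    _ = exp (L + log (2 * L)) / 2 := by rw [exp_add, exp_log (by linarith)]; ring
    _ ≤ cosh (L + log (2 * L)) := exp_div_two_le_cosh _

/-- For `f(x) = cosh x / x` with unique minimum point `x_min`, and `f⁻¹` the inverse of
`f` on the increasing branch `(x_min, ∞)`: for all sufficiently large `y`, any solution
`x > x_min` of `cosh x / x = y` satisfies
`ln(2y) ≤ ln(2y) + ln(ln(2y)) ≤ x ≤ ln(2y) + ln(2 ln(2y))`. -/
theorem stmt3 (xmin : ℝ) (hx : 0 < xmin)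
    (hchar : xmin * Real.sinh xmin = Real.cosh xmin) :
    ∃ y₀ : ℝ, ∀ y : ℝ, y₀ ≤ y → ∀ x : ℝ, xmin < x → Real.cosh x / x = y →
      Real.log (2 * y) ≤ Real.log (2 * y) + Real.log (Real.log (2 * y)) ∧
      Real.log (2 * y) + Real.log (Real.log (2 * y)) ≤ x ∧
      x ≤ Real.log (2 * y) + Real.log (2 * Real.log (2 * y)) := by
  refine ⟨exp (max xmin (exp 1)) / 2, fun y hy x hxmin hfx => ?_⟩
  have h2y : 0 < 2 * y := by linarith [exp_pos (max xmin (exp 1))]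
  have hy_eq : y = exp (log (2 * y)) / 2 := by rw [exp_log h2y]; ring
  set L := log (2 * y)
  have hML : max xmin (exp 1) ≤ L := (le_log_iff_exp_le h2y).2 (by linarith)
  have hxL : xmin ≤ L := le_of_max_le_left hML
  have heL : exp 1 ≤ L := le_of_max_le_right hML
  have hL2 : 2 ≤ L := by linarith [add_one_le_exp 1]
  have hlogL : 0 ≤ log L := log_nonneg (by linarith)
  have hlog2L : 0 ≤ log (2 * L) := log_nonneg (by linarith)
  have hf := strictMonoOn_cosh_div_self hx hchar
  have hxmem : x ∈ Ici xmin := mem_Ici.2 hxmin.le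
  refine ⟨le_add_of_nonneg_right hlogL, ?_, ?_⟩
  · refine (hf.le_iff_le (mem_Ici.2 (by linarith)) hxmem).1 ?_
    rw [hfx, hy_eq]
    exact cosh_div_self_add_log_le heL
  · refine (hf.le_iff_le hxmem (mem_Ici.2 (by linarith))).1 ?_
    rw [hfx, hy_eq]
    exact exp_div_two_le_cosh_div_self_add_log_two_mul (by linarith)
end

section
/- Fix R ≥ 1/2 and H > 0 small, and suppose ρ > 0 satisfies ρ·arcosh(R/ρ) = H with H/ρ > x_min (the 'small' catenoid solution, where x_min minimizes cosh(x)/x). Then ρ ≤ H/ln(2R/H) and in particular ρ ≤ H, provided 2R/H ≥ e. -/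
/-- The inverse of `cosh` on `[1, ∞)`. -/
noncomputable def arcosh (x : ℝ) : ℝ := Real.log (x + Real.sqrt (x ^ 2 - 1))

/-!
Put `x = H / ρ`. The equation says `cosh x = R / ρ`, so `2 R / H = 2 cosh x / x`, and the bound
`ρ ≤ H / log (2 R / H)` is `log (2 cosh x / x) ≤ x`, i.e. `2 cosh x ≤ x eˣ`, i.e.
`1 ≤ (x - 1) e²ˣ`. The critical-point equation `xₘ sinh xₘ = cosh xₘ` rewrites as
`(xₘ - 1) e^{2xₘ} = xₘ + 1`, so `xₘ > 1`, and since `(x - 1) e²ˣ` increases on `[1, ∞)`,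
every `x > xₘ` satisfies `(x - 1) e²ˣ ≥ xₘ + 1 ≥ 1`. Finally `x > 1` gives `ρ = H / x ≤ H`.
-/

lemma arcosh_eq_real_arcosh : arcosh = Real.arcosh := rfl

section

open Real

lemma cosh_eq_of_arcosh_eq {x y : ℝ} (hy : 0 < y) (hx : 0 < x) (h : _root_.arcosh y = x) :
    cosh x = y := by
  rw [arcosh_eq_real_arcosh] at h
  have hy1 : 1 < y := by
    rwa [← arcosh_lt_arcosh one_pos hy, arcosh_zero, h]
  rw [← h, cosh_arcosh hy1.le]

lemma sub_one_mul_exp_two_mul_eq {x : ℝ} (h : x * sinh x = cosh x) :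
    (x - 1) * exp (2 * x) = x + 1 := by
  rw [sinh_eq, cosh_eq, exp_neg] at h
  rw [two_mul, exp_add]
  field_simp at h
  linear_combination h

lemma one_lt_of_mul_sinh_eq_cosh {x : ℝ} (hx : 0 < x) (h : x * sinh x = cosh x) : 1 < x := by
  have := sub_one_mul_exp_two_mul_eq h
  by_contra! hle
  nlinarith [exp_pos (2 * x)]

lemma monotoneOn_sub_one_mul_exp_two_mul :
    MonotoneOn (fun x : ℝ ↦ (x - 1) * exp (2 * x)) (Set.Ici 1) := by
  intro a (ha : 1 ≤ a) b _ hab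
  have : exp (2 * a) ≤ exp (2 * b) := exp_le_exp.2 (by linarith)
  exact mul_le_mul (by linarith) this (exp_pos _).le (by linarith)

lemma two_mul_cosh_le_mul_exp {x : ℝ} (h : 1 ≤ (x - 1) * exp (2 * x)) :
    2 * cosh x ≤ x * exp x := by
  rw [two_mul, exp_add] at h
  have hexp := exp_pos x
  rw [cosh_eq, exp_neg, ← sub_nonneg]
  have hdiff : x * exp x - 2 * ((exp x + (exp x)⁻¹) / 2) =
      ((x - 1) * (exp x * exp x) - 1) / exp x := by
    field_simp; ring
  rw [hdiff]
  exact div_nonneg (by linarith) hexp.le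

lemma log_two_mul_cosh_div_self_le {x : ℝ} (hx : 0 < x) (h : 1 ≤ (x - 1) * exp (2 * x)) :
    log (2 * cosh x / x) ≤ x := by
  rw [log_le_iff_le_exp (by positivity), div_le_iff₀ hx, mul_comm (exp x)]
  exact two_mul_cosh_le_mul_exp h

lemma log_two_mul_cosh_div_self_pos {x : ℝ} (hx : 0 < x) : 0 < log (2 * cosh x / x) := by
  apply log_pos
  rw [one_lt_div hx, cosh_eq]
  nlinarith [add_one_le_exp x, exp_pos (-x)]

end

theorem stmt4_general (xmin R H ρ : ℝ) (hx : 0 < xmin)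
    (hchar : xmin * Real.sinh xmin = Real.cosh xmin)
    (hR : 1 / 2 ≤ R) (hH : 0 < H) (hρ : 0 < ρ)
    (heq : ρ * arcosh (R / ρ) = H) (hsmall : xmin < H / ρ) :
    ρ ≤ H / Real.log (2 * R / H) ∧ ρ ≤ H := by
  set x := H / ρ with hxdef
  have hx0 : 0 < x := by positivity
  have hρx : ρ = H / x := by rw [hxdef, div_div_cancel₀ hH.ne']
  have hcosh : Real.cosh x = R / ρ := by
    refine cosh_eq_of_arcosh_eq (div_pos (by linarith) hρ) hx0 ?_
    rw [hxdef, eq_div_iff hρ.ne', mul_comm, heq]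
  have h2RH : 2 * R / H = 2 * Real.cosh x / x := by
    rw [hcosh, hxdef]; field_simp
  have hxmin1 : 1 < xmin := one_lt_of_mul_sinh_eq_cosh hx hchar
  have hgrowth : 1 ≤ (x - 1) * Real.exp (2 * x) := calc
    1 ≤ xmin + 1 := by linarith
    _ = (xmin - 1) * Real.exp (2 * xmin) := (sub_one_mul_exp_two_mul_eq hchar).symm
    _ ≤ (x - 1) * Real.exp (2 * x) :=
      monotoneOn_sub_one_mul_exp_two_mul hxmin1.le
        (Set.mem_Ici.2 (by linarith)) hsmall.le
  rw [h2RH, hρx]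
  constructor
  · exact div_le_div_of_nonneg_left hH.le (log_two_mul_cosh_div_self_pos hx0)
      (log_two_mul_cosh_div_self_le hx0 hgrowth)
  · exact div_le_self hH.le (by linarith)

/-- Let `R ≥ 1/2`, `H > 0`, and suppose `ρ > 0` satisfies `ρ * arcosh (R/ρ) = H` with
`H/ρ > x_min` (the 'small' catenoid solution, `x_min` minimizing `cosh x / x`). Then
`ρ ≤ H / ln(2R/H)`, and in particular `ρ ≤ H`, provided `2R/H ≥ e`. -/
theorem stmt4 (xmin R H ρ : ℝ) (hx : 0 < xmin)
    (hchar : xmin * Real.sinh xmin = Real.cosh xmin)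
    (hmin : ∀ x : ℝ, 0 < x → Real.cosh xmin / xmin ≤ Real.cosh x / x)
    (hR : 1 / 2 ≤ R) (hH : 0 < H) (hρ : 0 < ρ)
    (heq : ρ * arcosh (R / ρ) = H) (hsmall : xmin < H / ρ)
    (he : Real.exp 1 ≤ 2 * R / H) :
    ρ ≤ H / Real.log (2 * R / H) ∧ ρ ≤ H :=
  stmt4_general xmin R H ρ hx hchar hR hH hρ heq hsmall
end

section
/- Fix m ≥ 3 and let c(r) = ∫₁^r (s^{2(m−1)} − 1)^{−1/2} ds with c_∞ = lim_{r→∞} c(r) < ∞. For R > 0 define h(ρ) = ρ·c(R/ρ) for 0 < ρ < R. Then h'(ρ) = c(R/ρ) − (R/ρ)·(( R/ρ)^{2(m−1)} − 1)^{−1/2}, h' has exactly one zero ρ₀ ∈ (0, R), and h attains a unique maximum H_∞ = h(ρ₀) on (0,R). -/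
/-!
Differentiating `ρ ↦ ρ c(R/ρ)` gives `c(t) - t c'(t)` at `t = R/ρ`: the value at `0` of the
tangent line to the graph of `c` at `t`. As `c' = (t^(2(m-1)) - 1)^(-1/2)` strictly decreases,
`c` is strictly concave, so this intercept strictly increases in `t` and `h'` strictly decreases
in `ρ`. Near `t = 1` the intercept is negative because `c'` blows up while `c` stays bounded; for
large `t` it is positive because `c` increases while `t c'(t) ≈ t^(2-m) → 0` once `m ≥ 3`. So
`h'` has a single zero, where it changes sign from positive to negative, and `h` has a strict
maximum there.
-/

/-- The higher-dimensional catenoid profile `c(r) = ∫₁^r (s^(2(m−1)) − 1)^(−1/2) ds`. -/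
noncomputable def cprof (m : ℕ) (r : ℝ) : ℝ :=
  ∫ s in Set.Ioo 1 r, (Real.sqrt (s ^ (2 * (m - 1)) - 1))⁻¹

open Set Filter Topology MeasureTheory

theorem lt_of_hasDerivAt_of_strictAntiOn {f f' : ℝ → ℝ} {a b x₀ x : ℝ}
    (hf : ∀ x ∈ Ioo a b, HasDerivAt f (f' x) x) (hf' : StrictAntiOn f' (Ioo a b))
    (hx₀ : x₀ ∈ Ioo a b) (hzero : f' x₀ = 0) (hx : x ∈ Ioo a b) (hne : x ≠ x₀) :
    f x < f x₀ := by
  have hcont : ContinuousOn f (Ioo a b) := fun y hy => (hf y hy).continuousAt.continuousWithinAt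
  rcases hne.lt_or_gt with hlt | hgt
  · have hmono : StrictMonoOn f (Ioc a x₀) := by
      refine strictMonoOn_of_deriv_pos (convex_Ioc a x₀)
        (hcont.mono (Ioc_subset_Ioo_right hx₀.2)) fun y hy => ?_
      rw [interior_Ioc] at hy
      have hy' : y ∈ Ioo a b := ⟨hy.1, hy.2.trans hx₀.2⟩
      rw [(hf y hy').deriv, ← hzero]
      exact hf' hy' hx₀ hy.2
    exact hmono ⟨hx.1, hlt.le⟩ ⟨hx₀.1, le_rfl⟩ hlt
  · have hanti : StrictAntiOn f (Ico x₀ b) := by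
      refine strictAntiOn_of_deriv_neg (convex_Ico x₀ b)
        (hcont.mono (Ico_subset_Ioo_left hx₀.1)) fun y hy => ?_
      rw [interior_Ico] at hy
      have hy' : y ∈ Ioo a b := ⟨hx₀.1.trans hy.1, hy.2⟩
      rw [(hf y hy').deriv, ← hzero]
      exact hf' hx₀ hy' hy.1
    exact hanti ⟨le_rfl, hx₀.2⟩ ⟨hgt.le, hx.2⟩ hgt

noncomputable def catenoidIntegrand (n : ℕ) (s : ℝ) : ℝ := (√(s ^ n - 1))⁻¹

section catenoidIntegrand

variable {n : ℕ} {s : ℝ}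

theorem pow_sub_one_pos_of_one_lt (hn : 1 ≤ n) (hs : 1 < s) : 0 < s ^ n - 1 :=
  sub_pos.2 (one_lt_pow₀ hs (by omega))

theorem catenoidIntegrand_nonneg (n : ℕ) (s : ℝ) : 0 ≤ catenoidIntegrand n s :=
  inv_nonneg.2 (Real.sqrt_nonneg _)

theorem catenoidIntegrand_pos (hn : 1 ≤ n) (hs : 1 < s) : 0 < catenoidIntegrand n s :=
  inv_pos.2 (Real.sqrt_pos.2 (pow_sub_one_pos_of_one_lt hn hs))

theorem continuous_sqrt_pow_sub_one (n : ℕ) : Continuous fun s : ℝ => √(s ^ n - 1) := by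
  fun_prop

theorem continuousAt_catenoidIntegrand (hn : 1 ≤ n) (hs : 1 < s) :
    ContinuousAt (catenoidIntegrand n) s :=
  (continuous_sqrt_pow_sub_one n).continuousAt.inv₀
    (Real.sqrt_pos.2 (pow_sub_one_pos_of_one_lt hn hs)).ne'

theorem measurable_catenoidIntegrand (n : ℕ) : Measurable (catenoidIntegrand n) :=
  (continuous_sqrt_pow_sub_one n).measurable.inv

/-- Near the singularity `s ^ n - 1 ≥ s - 1`, so the integrand is dominated by
`(s - 1) ^ (-1/2)`. -/
theorem integrableOn_catenoidIntegrand_Ioc (hn : 1 ≤ n) (t : ℝ) :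
    IntegrableOn (catenoidIntegrand n) (Ioc 1 t) := by
  rcases le_or_gt t 1 with ht | ht
  · simp [Ioc_eq_empty_of_le ht]
  have hdom : IntegrableOn (fun s : ℝ => (s - 1) ^ (-(1 / 2) : ℝ)) (Ioc 1 t) := by
    rw [← intervalIntegrable_iff_integrableOn_Ioc_of_le ht.le]
    simpa using (intervalIntegral.intervalIntegrable_rpow' (a := 0) (b := t - 1)
      (by norm_num : (-1 : ℝ) < -(1 / 2))).comp_sub_right 1
  refine hdom.mono' (measurable_catenoidIntegrand n).aestronglyMeasurable ?_
  filter_upwards [ae_restrict_mem measurableSet_Ioc] with s hs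
  have hs1 : 0 < s - 1 := sub_pos.2 hs.1
  rw [Real.norm_of_nonneg (catenoidIntegrand_nonneg n s), Real.rpow_neg hs1.le,
    ← Real.sqrt_eq_rpow]
  refine inv_anti₀ (Real.sqrt_pos.2 hs1) (Real.sqrt_le_sqrt ?_)
  linarith [le_self_pow₀ hs.1.le (by omega : n ≠ 0)]

theorem hasDerivAt_catenoidIntegrand (hn : 1 ≤ n) (hs : 1 < s) :
    HasDerivAt (catenoidIntegrand n) (-(n * s ^ (n - 1)) / (2 * √(s ^ n - 1) ^ 3)) s := by
  have hu := pow_sub_one_pos_of_one_lt hn hs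
  have hsqrt := Real.sqrt_pos.2 hu
  refine ((((hasDerivAt_pow n s).sub_const 1).sqrt hu.ne').inv hsqrt.ne').congr_deriv ?_
  field_simp

theorem tendsto_catenoidIntegrand_nhdsGT_one (hn : 1 ≤ n) :
    Tendsto (catenoidIntegrand n) (𝓝[>] 1) atTop := by
  refine tendsto_inv_nhdsGT_zero.comp (tendsto_nhdsWithin_iff.2 ⟨?_, ?_⟩)
  · have := (continuous_sqrt_pow_sub_one n).continuousWithinAt (s := Ioi 1) (x := 1)
    simpa using this.tendsto
  · filter_upwards [self_mem_nhdsWithin] with s hs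
    exact Real.sqrt_pos.2 (pow_sub_one_pos_of_one_lt hn hs)

theorem tendsto_mul_catenoidIntegrand_atTop (hn : 3 ≤ n) :
    Tendsto (fun t => t * catenoidIntegrand n t) atTop (𝓝 0) := by
  -- `t * catenoidIntegrand n t = (√((t ^ n - 1) / t ^ 2))⁻¹` for `t > 0`
  have hquot : Tendsto (fun t : ℝ => (t ^ n - 1) / t ^ 2) atTop atTop := by
    refine tendsto_atTop_mono' atTop ?_
      ((tendsto_pow_atTop (by omega : n - 2 ≠ 0)).atTop_add
        (tendsto_const_nhds (x := (-1 : ℝ))))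
    filter_upwards [eventually_ge_atTop 1] with t ht
    rw [le_div_iff₀ (by positivity)]
    have : t ^ (n - 2) * t ^ 2 = t ^ n := by rw [← pow_add, Nat.sub_add_cancel (by omega)]
    nlinarith [one_le_pow₀ (n := 2) ht]
  refine (tendsto_inv_atTop_zero.comp (Real.tendsto_sqrt_atTop.comp hquot)).congr' ?_
  filter_upwards [eventually_gt_atTop 0] with t ht
  rw [Function.comp_apply, Function.comp_apply, Real.sqrt_div' _ (by positivity),
    Real.sqrt_sq ht.le, inv_div, div_eq_mul_inv, catenoidIntegrand]

end catenoidIntegrand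

section cprof

variable {m : ℕ} {t : ℝ}

theorem cprof_nonneg (m : ℕ) (t : ℝ) : 0 ≤ cprof m t :=
  integral_nonneg fun s => catenoidIntegrand_nonneg _ s

theorem hasDerivAt_cprof (hm : 2 ≤ m) (ht : 1 < t) :
    HasDerivAt (cprof m) (catenoidIntegrand (2 * (m - 1)) t) t := by
  have hn : 1 ≤ 2 * (m - 1) := by omega
  have hftc : HasDerivAt (fun r => ∫ s in (1 : ℝ)..r, catenoidIntegrand (2 * (m - 1)) s)
      (catenoidIntegrand (2 * (m - 1)) t) t :=
    intervalIntegral.integral_hasDerivAt_right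
      ((intervalIntegrable_iff_integrableOn_Ioc_of_le ht.le).2
        (integrableOn_catenoidIntegrand_Ioc hn t))
      (measurable_catenoidIntegrand _).stronglyMeasurable.stronglyMeasurableAtFilter
      (continuousAt_catenoidIntegrand hn ht)
  refine hftc.congr_of_eventuallyEq ?_
  filter_upwards [Ioi_mem_nhds ht] with r hr
  rw [intervalIntegral.integral_of_le (le_of_lt hr), integral_Ioc_eq_integral_Ioo]
  rfl

theorem strictMonoOn_cprof (hm : 2 ≤ m) : StrictMonoOn (cprof m) (Ioi 1) :=
  strictMonoOn_of_deriv_pos (convex_Ioi 1)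
    (fun _ ht => (hasDerivAt_cprof hm ht).continuousAt.continuousWithinAt)
    fun t ht => by
      rw [interior_Ioi] at ht
      rw [(hasDerivAt_cprof hm ht).deriv]
      exact catenoidIntegrand_pos (by omega) ht

theorem cprof_two_pos (hm : 2 ≤ m) : 0 < cprof m 2 :=
  (cprof_nonneg m (3 / 2)).trans_lt
    (strictMonoOn_cprof hm (by norm_num : (1 : ℝ) < 3 / 2) (by norm_num : (1 : ℝ) < 2)
      (by norm_num))

end cprof

/-- The value at `0` of the tangent line to the graph of `cprof m` at `t`. -/
noncomputable def tangentIntercept (m : ℕ) (t : ℝ) : ℝ :=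
  cprof m t - t * catenoidIntegrand (2 * (m - 1)) t

section tangentIntercept

variable {m : ℕ} {t : ℝ}

theorem hasDerivAt_tangentIntercept (hm : 2 ≤ m) (ht : 1 < t) :
    HasDerivAt (tangentIntercept m) (t * ((2 * (m - 1) : ℕ) * t ^ (2 * (m - 1) - 1)) /
      (2 * √(t ^ (2 * (m - 1)) - 1) ^ 3)) t := by
  have hn : 1 ≤ 2 * (m - 1) := by omega
  refine ((hasDerivAt_cprof hm ht).sub
    ((hasDerivAt_id' t).mul (hasDerivAt_catenoidIntegrand hn ht))).congr_deriv ?_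
  ring

theorem strictMonoOn_tangentIntercept (hm : 2 ≤ m) :
    StrictMonoOn (tangentIntercept m) (Ioi 1) :=
  strictMonoOn_of_deriv_pos (convex_Ioi 1)
    (fun _ ht => (hasDerivAt_tangentIntercept hm ht).continuousAt.continuousWithinAt)
    fun t ht => by
      rw [interior_Ioi] at ht
      rw [(hasDerivAt_tangentIntercept hm ht).deriv]
      have : (0 : ℝ) < (2 * (m - 1) : ℕ) := by exact_mod_cast (by omega : 0 < 2 * (m - 1))
      have := Real.sqrt_pos.2 (pow_sub_one_pos_of_one_lt (by omega : 1 ≤ 2 * (m - 1)) ht)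
      have : (0 : ℝ) < t := zero_lt_one.trans ht
      positivity

theorem exists_tangentIntercept_neg (hm : 2 ≤ m) : ∃ a, 1 < a ∧ tangentIntercept m a < 0 := by
  have hev : ∀ᶠ a in 𝓝[>] (1 : ℝ),
      1 < a ∧ a < 2 ∧ cprof m 2 < catenoidIntegrand (2 * (m - 1)) a :=
    eventually_mem_nhdsWithin.and
      ((eventually_lt_nhds one_lt_two).filter_mono nhdsWithin_le_nhds |>.and
        ((tendsto_catenoidIntegrand_nhdsGT_one (by omega)).eventually_gt_atTop _))
  obtain ⟨a, ha1, ha2, hfa⟩ := hev.exists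
  refine ⟨a, ha1, ?_⟩
  have hca : cprof m a < cprof m 2 := strictMonoOn_cprof hm ha1 (mem_Ioi.2 one_lt_two) ha2
  have : catenoidIntegrand (2 * (m - 1)) a ≤ a * catenoidIntegrand (2 * (m - 1)) a :=
    le_mul_of_one_le_left (catenoidIntegrand_nonneg _ _) ha1.le
  unfold tangentIntercept
  linarith

theorem exists_tangentIntercept_pos (hm : 3 ≤ m) : ∃ b, 1 < b ∧ 0 < tangentIntercept m b := by
  have hev : ∀ᶠ b in atTop, 2 ≤ b ∧ b * catenoidIntegrand (2 * (m - 1)) b < cprof m 2 :=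
    (eventually_ge_atTop 2).and
      ((tendsto_mul_catenoidIntegrand_atTop (by omega)).eventually_lt_const
        (cprof_two_pos (by omega)))
  obtain ⟨b, hb2, hfb⟩ := hev.exists
  refine ⟨b, by linarith, ?_⟩
  have hcb : cprof m 2 ≤ cprof m b :=
    (strictMonoOn_cprof (by omega)).monotoneOn (mem_Ioi.2 one_lt_two)
      (by linarith : (1 : ℝ) < b) hb2
  unfold tangentIntercept
  linarith

theorem exists_tangentIntercept_eq_zero (hm : 3 ≤ m) :
    ∃ t₀, 1 < t₀ ∧ tangentIntercept m t₀ = 0 := by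
  obtain ⟨a, ha, hneg⟩ := exists_tangentIntercept_neg (by omega : 2 ≤ m)
  obtain ⟨b, hb, hpos⟩ := exists_tangentIntercept_pos hm
  have hmono := strictMonoOn_tangentIntercept (by omega : 2 ≤ m)
  have hab : a ≤ b := (hmono.lt_iff_lt ha hb).1 (hneg.trans hpos) |>.le
  have hcont : ContinuousOn (tangentIntercept m) (Icc a b) := fun t ht =>
    (hasDerivAt_tangentIntercept (by omega) (ha.trans_le ht.1)).continuousAt.continuousWithinAt
  obtain ⟨t₀, ht₀, hzero⟩ := intermediate_value_Icc hab hcont ⟨hneg.le, hpos.le⟩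
  exact ⟨t₀, ha.trans_le ht₀.1, hzero⟩

end tangentIntercept

section profileHeight

variable {m : ℕ} {R ρ : ℝ}

theorem hasDerivAt_mul_cprof_div (hm : 2 ≤ m) (hρ : ρ ∈ Ioo 0 R) :
    HasDerivAt (fun σ => σ * cprof m (R / σ)) (tangentIntercept m (R / ρ)) ρ := by
  have hinv : HasDerivAt (fun σ => R / σ) (-(R / ρ ^ 2)) ρ := by
    simpa [div_eq_mul_inv] using (hasDerivAt_inv hρ.1.ne').const_mul R
  refine ((hasDerivAt_id' ρ).mul ((hasDerivAt_cprof hm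
    ((one_lt_div hρ.1).2 hρ.2)).comp ρ hinv)).congr_deriv ?_
  rw [tangentIntercept, Function.comp_apply]
  field_simp
  ring

theorem strictAntiOn_tangentIntercept_div (hm : 2 ≤ m) (hR : 0 < R) :
    StrictAntiOn (fun ρ => tangentIntercept m (R / ρ)) (Ioo 0 R) :=
  fun _ hρ _ hσ hρσ => strictMonoOn_tangentIntercept hm ((one_lt_div hσ.1).2 hσ.2)
    ((one_lt_div hρ.1).2 hρ.2) (div_lt_div_of_pos_left hR hρ.1 hρσ)

end profileHeight

/-- For `m ≥ 3` and `R > 0`, the function `h(ρ) = ρ · c(R/ρ)` on `(0, R)` has derivative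
`h'(ρ) = c(R/ρ) − (R/ρ) (( R/ρ)^(2(m−1)) − 1)^(−1/2)`, `h'` has exactly one zero
`ρ₀ ∈ (0, R)`, and `h` attains a unique maximum at `ρ₀`. -/
theorem stmt7 (m : ℕ) (hm : 3 ≤ m) (R : ℝ) (hR : 0 < R) :
    (∀ ρ ∈ Set.Ioo (0 : ℝ) R,
      HasDerivAt (fun σ : ℝ => σ * cprof m (R / σ))
        (cprof m (R / ρ) - (R / ρ) * (Real.sqrt ((R / ρ) ^ (2 * (m - 1)) - 1))⁻¹) ρ) ∧
    (∃! ρ₀ : ℝ, ρ₀ ∈ Set.Ioo (0 : ℝ) R ∧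
      cprof m (R / ρ₀) - (R / ρ₀) * (Real.sqrt ((R / ρ₀) ^ (2 * (m - 1)) - 1))⁻¹ = 0) ∧
    ∃ ρ₀ ∈ Set.Ioo (0 : ℝ) R,
      (cprof m (R / ρ₀) - (R / ρ₀) * (Real.sqrt ((R / ρ₀) ^ (2 * (m - 1)) - 1))⁻¹ = 0) ∧
      ∀ ρ ∈ Set.Ioo (0 : ℝ) R, ρ ≠ ρ₀ → ρ * cprof m (R / ρ) < ρ₀ * cprof m (R / ρ₀) := by
  have hderiv : ∀ ρ ∈ Ioo 0 R,
      HasDerivAt (fun σ => σ * cprof m (R / σ)) (tangentIntercept m (R / ρ)) ρ :=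
    fun ρ hρ => hasDerivAt_mul_cprof_div (by omega) hρ
  have hanti := strictAntiOn_tangentIntercept_div (by omega : 2 ≤ m) hR
  obtain ⟨t₀, ht₀, hzero⟩ := exists_tangentIntercept_eq_zero hm
  have hρ₀ : R / t₀ ∈ Ioo 0 R :=
    ⟨div_pos hR (zero_lt_one.trans ht₀), div_lt_self hR ht₀⟩
  have hzero' : tangentIntercept m (R / (R / t₀)) = 0 := by rwa [div_div_cancel₀ hR.ne']
  refine ⟨hderiv, ⟨R / t₀, ⟨hρ₀, hzero'⟩, fun ρ hρ => ?_⟩,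
    R / t₀, hρ₀, hzero', fun ρ hρ hne => ?_⟩
  · exact hanti.injOn hρ.1 hρ₀ (hρ.2.trans hzero'.symm)
  · exact lt_of_hasDerivAt_of_strictAntiOn hderiv hanti hρ₀ hzero' hρ hne
end

section
/- Fix m ≥ 3, let c, c_∞, and R > 0 be as in the higher-dimensional catenoid construction, and fix R_∞ > 1 with c_∞/2 ≤ c(R_∞) ≤ c_∞. Then for H > 0 sufficiently small: (i) ρ·c(R/ρ) ≤ H whenever 0 < ρ ≤ H/c_∞, and (ii) ρ·c(R/ρ) ≥ H whenever 2H/c_∞ ≤ ρ ≤ R/R_∞. Hence the smaller solution ρ of ρ·c(R/ρ) = H satisfies H/c_∞ ≤ ρ ≤ 2H/c_∞. -/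
/-!
Near `s = 1` the integrand of `c` is at most `(s - 1)^(-1/2)`, so `c` is finite, continuous,
nondecreasing and positive on `(1, ∞)`; in particular `c ≤ c_∞` and `c_∞ > 0`. Part (i) is then
`ρ c(R/ρ) ≤ ρ c_∞`, and part (ii) is `c(R/ρ) ≥ c(R_∞) ≥ c_∞/2`, since `ρ ≤ R/R_∞` means
`R/ρ ≥ R_∞`. For `H` small, `2H/c_∞ ≤ R/R_∞`, so `h(ρ) = ρ c(R/ρ)` is `≤ H` at `H/c_∞` and `≥ H`
at `2H/c_∞`; by the intermediate value theorem it takes the value `H` in between, which bounds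
the smallest solution from above, while `H = h(ρ) ≤ ρ c_∞` bounds it from below.
-/

open MeasureTheory Set Filter

noncomputable def cprofIntegrand (m : ℕ) (s : ℝ) : ℝ :=
  (Real.sqrt (s ^ (2 * (m - 1)) - 1))⁻¹

lemma cprof_eq_setIntegral (m : ℕ) (r : ℝ) :
    cprof m r = ∫ s in Ioo 1 r, cprofIntegrand m s := rfl

lemma cprofIntegrand_nonneg (m : ℕ) (s : ℝ) : 0 ≤ cprofIntegrand m s := by
  unfold cprofIntegrand; positivity

lemma measurable_cprofIntegrand (m : ℕ) : Measurable (cprofIntegrand m) :=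
  (Real.continuous_sqrt.comp ((continuous_pow _).sub continuous_const)).measurable.inv

section Profile

variable {m : ℕ}

lemma cprofIntegrand_pos (hm : 2 ≤ m) {s : ℝ} (hs : 1 < s) : 0 < cprofIntegrand m s := by
  have : 1 < s ^ (2 * (m - 1)) := one_lt_pow₀ hs (by omega)
  unfold cprofIntegrand
  exact inv_pos.mpr (Real.sqrt_pos.mpr (by linarith))

lemma cprofIntegrand_le_rpow (hm : 2 ≤ m) {s : ℝ} (hs : 1 < s) :
    cprofIntegrand m s ≤ (s - 1) ^ (-(1 / 2) : ℝ) := by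
  have hs₀ : 0 < s - 1 := by linarith
  have hle : s - 1 ≤ s ^ (2 * (m - 1)) - 1 := by
    linarith [le_self_pow₀ hs.le (show 2 * (m - 1) ≠ 0 by omega)]
  calc cprofIntegrand m s ≤ (Real.sqrt (s - 1))⁻¹ :=
        inv_anti₀ (Real.sqrt_pos.mpr hs₀) (Real.sqrt_le_sqrt hle)
    _ = (s - 1) ^ (-(1 / 2) : ℝ) := by rw [Real.rpow_neg hs₀.le, Real.sqrt_eq_rpow]

lemma integrableOn_cprofIntegrand (hm : 2 ≤ m) (b : ℝ) :
    IntegrableOn (cprofIntegrand m) (Ioo 1 b) := by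
  have hdom : IntegrableOn (fun s : ℝ => (s - 1) ^ (-(1 / 2) : ℝ)) (Ioc 1 b) := by
    have := (intervalIntegral.intervalIntegrable_rpow' (a := 0) (b := b - 1)
      (r := -(1 / 2)) (by norm_num)).comp_sub_right 1
    rw [zero_add, sub_add_cancel] at this
    exact this.1
  refine (hdom.mono_set Ioo_subset_Ioc_self).mono'
    (measurable_cprofIntegrand m).aestronglyMeasurable ?_
  refine (ae_restrict_iff' measurableSet_Ioo).mpr (Eventually.of_forall fun s hs => ?_)
  rw [Real.norm_of_nonneg (cprofIntegrand_nonneg m s)]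
  exact cprofIntegrand_le_rpow hm hs.1

lemma cprof_mono (hm : 2 ≤ m) : Monotone (cprof m) := fun _ r₂ h =>
  setIntegral_mono_set (integrableOn_cprofIntegrand hm r₂)
    (Eventually.of_forall (cprofIntegrand_nonneg m)) (Ioo_subset_Ioo_right h).eventuallyLE

lemma cprof_pos (hm : 2 ≤ m) {r : ℝ} (hr : 1 < r) : 0 < cprof m r := by
  rw [cprof_eq_setIntegral, ← integral_Ioc_eq_integral_Ioo, ← intervalIntegral.integral_of_le hr.le]
  exact intervalIntegral.intervalIntegral_pos_of_pos_on
    ((intervalIntegrable_iff_integrableOn_Ioo_of_le hr.le).2 (integrableOn_cprofIntegrand hm r))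
    (fun s hs => cprofIntegrand_pos hm hs.1) hr

lemma continuousOn_cprof (hm : 2 ≤ m) (b : ℝ) : ContinuousOn (cprof m) (Icc 1 b) := by
  have h := intervalIntegral.continuousOn_primitive
    ((integrableOn_Icc_iff_integrableOn_Ioo).mpr (integrableOn_cprofIntegrand hm b))
  exact h.congr fun r _ => integral_Ioc_eq_integral_Ioo.symm

lemma cprof_le_of_tendsto (hm : 2 ≤ m) {cinf : ℝ} (hlim : Tendsto (cprof m) atTop (nhds cinf))
    (r : ℝ) : cprof m r ≤ cinf :=
  (cprof_mono hm).ge_of_tendsto hlim r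

end Profile

section Rescaled

variable {c : ℝ → ℝ} {R cinf H ρ : ℝ}

lemma mul_apply_div_le (hc : ∀ r, c r ≤ cinf) (hcinf : 0 < cinf) (hρ : 0 ≤ ρ)
    (hρH : ρ ≤ H / cinf) : ρ * c (R / ρ) ≤ H :=
  calc ρ * c (R / ρ) ≤ ρ * cinf := mul_le_mul_of_nonneg_left (hc _) hρ
    _ ≤ H := (le_div_iff₀ hcinf).mp hρH

lemma le_mul_apply_div {Rinf : ℝ} (hc : Monotone c) (hcRinf : cinf / 2 ≤ c Rinf)
    (hcinf : 0 < cinf) (hRinf : 0 < Rinf) (hH : 0 < H) (hHρ : 2 * H / cinf ≤ ρ)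
    (hρR : ρ ≤ R / Rinf) : H ≤ ρ * c (R / ρ) := by
  have hρ : 0 < ρ := lt_of_lt_of_le (by positivity) hHρ
  have hRinf_le : Rinf ≤ R / ρ := (le_div_comm₀ hρ hRinf).mp hρR
  calc H = 2 * H / cinf * (cinf / 2) := by field_simp
    _ ≤ ρ * c (R / ρ) :=
      mul_le_mul hHρ (hcRinf.trans (hc hRinf_le)) (by positivity) hρ.le

lemma continuousOn_mul_apply_div {a b : ℝ} (hR : 0 ≤ R) (ha : 0 < a)
    (hc : ContinuousOn c (Icc (R / b) (R / a))) :
    ContinuousOn (fun ρ => ρ * c (R / ρ)) (Icc a b) := by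
  have hmaps : MapsTo (fun ρ => R / ρ) (Icc a b) (Icc (R / b) (R / a)) := fun ρ hρ =>
    ⟨div_le_div_of_nonneg_left hR (ha.trans_le hρ.1) hρ.2,
      div_le_div_of_nonneg_left hR ha hρ.1⟩
  exact continuousOn_id.mul (hc.comp
    (continuousOn_const.div continuousOn_id fun ρ hρ => (ha.trans_le hρ.1).ne') hmaps)

end Rescaled

theorem stmt8_general (m : ℕ) (hm : 3 ≤ m) (R Rinf cinf : ℝ) (hR : 0 < R) (hRinf : 1 < Rinf)
    (hlim : Filter.Tendsto (fun r => cprof m r) Filter.atTop (nhds cinf))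
    (hc2 : cinf / 2 ≤ cprof m Rinf) :
    ∃ H₀ : ℝ, 0 < H₀ ∧ ∀ H : ℝ, 0 < H → H ≤ H₀ →
      (∀ ρ : ℝ, 0 < ρ → ρ ≤ H / cinf → ρ * cprof m (R / ρ) ≤ H) ∧
      (∀ ρ : ℝ, 2 * H / cinf ≤ ρ → ρ ≤ R / Rinf → H ≤ ρ * cprof m (R / ρ)) ∧
      (∀ ρ : ℝ, 0 < ρ → ρ * cprof m (R / ρ) = H →
        (∀ ρ' : ℝ, 0 < ρ' → ρ' * cprof m (R / ρ') = H → ρ ≤ ρ') →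
        H / cinf ≤ ρ ∧ ρ ≤ 2 * H / cinf) := by
  have hm2 : 2 ≤ m := by omega
  have hle := cprof_le_of_tendsto hm2 hlim
  have hcinf : 0 < cinf := (cprof_pos hm2 hRinf).trans_le (hle Rinf)
  refine ⟨R * cinf / (2 * Rinf), by positivity, fun H hH hH₀ => ?_⟩
  have hsmall : 2 * H / cinf ≤ R / Rinf := by
    rw [div_le_div_iff₀ hcinf (by positivity)]
    nlinarith [(le_div_iff₀ (by positivity : (0 : ℝ) < 2 * Rinf)).mp hH₀]
  have hlower : ∀ ρ, 0 < ρ → ρ ≤ H / cinf → ρ * cprof m (R / ρ) ≤ H :=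
    fun ρ hρ => mul_apply_div_le hle hcinf hρ.le
  have hupper : ∀ ρ, 2 * H / cinf ≤ ρ → ρ ≤ R / Rinf → H ≤ ρ * cprof m (R / ρ) :=
    fun ρ => le_mul_apply_div (cprof_mono hm2) hc2 hcinf (by positivity) hH
  refine ⟨hlower, hupper, fun ρ hρ hsol hmin => ⟨?_, ?_⟩⟩
  · exact (div_le_iff₀ hcinf).mpr (hsol ▸ mul_le_mul_of_nonneg_left (hle _) hρ.le)
  · have hone : 1 ≤ R / (2 * H / cinf) :=
      hRinf.le.trans ((le_div_comm₀ (by positivity) (by positivity)).mp hsmall)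
    have hcont := continuousOn_mul_apply_div hR.le (a := H / cinf) (by positivity)
      ((continuousOn_cprof hm2 _).mono (Icc_subset_Icc_left hone))
    obtain ⟨ρ', hρ', hsol'⟩ := intermediate_value_Icc
      (div_le_div_of_nonneg_right (by linarith) hcinf.le) hcont
      ⟨hlower _ (by positivity) le_rfl, hupper _ le_rfl hsmall⟩
    exact (hmin ρ' ((by positivity : 0 < H / cinf).trans_le hρ'.1) hsol').trans hρ'.2

/-- For `m ≥ 3`, `c_∞ = lim c`, `R > 0` and `R_∞ > 1` with `c_∞/2 ≤ c(R_∞) ≤ c_∞`: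
for all sufficiently small `H > 0`, (i) `ρ c(R/ρ) ≤ H` whenever `0 < ρ ≤ H/c_∞`, and
(ii) `ρ c(R/ρ) ≥ H` whenever `2H/c_∞ ≤ ρ ≤ R/R_∞`. Hence the smaller solution `ρ` of
`ρ c(R/ρ) = H` satisfies `H/c_∞ ≤ ρ ≤ 2H/c_∞`. -/
theorem stmt8 (m : ℕ) (hm : 3 ≤ m) (R Rinf cinf : ℝ) (hR : 0 < R) (hRinf : 1 < Rinf)
    (hlim : Filter.Tendsto (fun r => cprof m r) Filter.atTop (nhds cinf))
    (hc2 : cinf / 2 ≤ cprof m Rinf) (hc3 : cprof m Rinf ≤ cinf) :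
    ∃ H₀ : ℝ, 0 < H₀ ∧ ∀ H : ℝ, 0 < H → H ≤ H₀ →
      (∀ ρ : ℝ, 0 < ρ → ρ ≤ H / cinf → ρ * cprof m (R / ρ) ≤ H) ∧
      (∀ ρ : ℝ, 2 * H / cinf ≤ ρ → ρ ≤ R / Rinf → H ≤ ρ * cprof m (R / ρ)) ∧
      (∀ ρ : ℝ, 0 < ρ → ρ * cprof m (R / ρ) = H →
        (∀ ρ' : ℝ, 0 < ρ' → ρ' * cprof m (R / ρ') = H → ρ ≤ ρ') →
        H / cinf ≤ ρ ∧ ρ ≤ 2 * H / cinf) :=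
  stmt8_general m hm R Rinf cinf hR hRinf hlim hc2
end
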